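/- arXiv:2406.16131 — 2 statements merged into one kernel-verified Lean document; each statement's English description precedes it below -/
import Mathlib

section
/- Let κ ≥ 0 be locally integrable with κ̃(τ) = ∫₀^τ κ(s) ds, and suppose ξ₁, ξ₂ : [0,τ] → (0,∞) are integrable with ∫₀^τ ξ₁ = ∫₀^τ ξ₂ and ξ₁ - ξ₂ nonincreasing with ξ₁(0) ≥ ξ₂(0) (so ξ₁ is more 'backwardated'). If κ̃ is nondecreasing, then the affine leading-order SSR with curve ξ₁ is at most that with curve ξ₂: [∫₀^τ ξ₁]·κ̃(τ)/∫₀^τ ξ₁(s)κ̃(τ-s) ds ≤ [∫₀^τ ξ₂]·κ̃(τ)/∫₀^τ ξ₂(s)κ̃(τ-s) ds, provided ∫₀^τ ξ₁(s)κ̃(τ-s) ds ≥ ∫₀^τ ξ₂(s)κ̃(τ-s) ds follows; equivalently ∫₀^τ (ξ₁(s) - ξ₂(s))·κ̃(τ-s) ds ≥ 0. -/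
/-!
An antitone function `f` on `[a, b]` changes sign at most once: it is `≥ 0` before some
crossing point `t` and `≤ 0` after it. If `g` is also antitone, then `f s * (g s - g t) ≥ 0`
everywhere, and integrating (using `∫ f = 0` to drop the constant `g t`) gives the Chebyshev-type
inequality `∫ f * g ≥ 0`. With `f = ξ₁ - ξ₂` and `g s = κ̃(τ - s)` this says that the denominator
of the SSR is larger for `ξ₁`, while the numerators agree.
-/

open Real MeasureTheory intervalIntegral

theorem AntitoneOn.exists_sign_change {f : ℝ → ℝ} {a b : ℝ} (hab : a ≤ b)
    (hf : AntitoneOn f (Set.Icc a b)) :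
    ∃ t ∈ Set.Icc a b, ∀ s ∈ Set.Icc a b, (s < t → 0 ≤ f s) ∧ (t < s → f s ≤ 0) := by
  -- `a` is thrown in so that the set is nonempty even when `f a < 0`.
  set S : Set ℝ := insert a {s ∈ Set.Icc a b | 0 ≤ f s}
  have hS_bdd : BddAbove S := ⟨b, by rintro s (rfl | hs); exacts [hab, hs.1.2]⟩
  have hS_ub : ∀ s ∈ S, s ≤ b := by rintro s (rfl | hs); exacts [hab, hs.1.2]
  refine ⟨sSup S, ⟨le_csSup hS_bdd (Set.mem_insert a _), csSup_le ⟨a, Set.mem_insert a _⟩ hS_ub⟩,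
    fun s hs => ⟨fun hst => ?_, fun hts => ?_⟩⟩
  · obtain ⟨u, hu, hsu⟩ := exists_lt_of_lt_csSup ⟨a, Set.mem_insert a _⟩ hst
    rcases hu with rfl | hu
    · exact absurd hs.1 (not_le.mpr hsu)
    · exact hu.2.trans (hf hs hu.1 hsu.le)
  · by_contra! hpos
    exact not_le.mpr hts (le_csSup hS_bdd (Or.inr ⟨hs, hpos.le⟩))

theorem intervalIntegral.integral_mul_nonneg_of_antitoneOn {f g : ℝ → ℝ} {a b : ℝ} (hab : a ≤ b)
    (hf : AntitoneOn f (Set.Icc a b)) (hg : AntitoneOn g (Set.Icc a b))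
    (hf_int : IntervalIntegrable f volume a b)
    (hfg_int : IntervalIntegrable (fun s => f s * g s) volume a b)
    (hf_zero : ∫ s in a..b, f s = 0) :
    0 ≤ ∫ s in a..b, f s * g s := by
  obtain ⟨t, ht, hsign⟩ := hf.exists_sign_change hab
  have hpointwise : ∀ s ∈ Set.Icc a b, 0 ≤ f s * (g s - g t) := by
    intro s hs
    rcases lt_trichotomy s t with hst | rfl | hts
    · exact mul_nonneg ((hsign s hs).1 hst) (sub_nonneg.mpr (hg hs ht hst.le))
    · simp
    · exact mul_nonneg_of_nonpos_of_nonpos ((hsign s hs).2 hts)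
        (sub_nonpos.mpr (hg ht hs hts.le))
  calc 0 ≤ ∫ s in a..b, f s * (g s - g t) := integral_nonneg hab hpointwise
    _ = (∫ s in a..b, f s * g s) - g t * ∫ s in a..b, f s := by
      simp only [mul_sub, ← integral_const_mul]
      rw [← integral_sub hfg_int (hf_int.const_mul _)]
      simp only [mul_comm (g t)]
    _ = ∫ s in a..b, f s * g s := by rw [hf_zero, mul_zero, sub_zero]

theorem affine_ssr_backwardation_lowers_general (κ : ℝ → ℝ) (τ : ℝ) (hτ : 0 < τ)
    (κt : ℝ → ℝ) (hκt : κt = fun x => ∫ s in (0:ℝ)..x, κ s)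
    (hκt_mono : MonotoneOn κt (Set.Icc 0 τ))
    (ξ1 ξ2 : ℝ → ℝ)
    (hξ2_pos : ∀ s ∈ Set.Icc (0:ℝ) τ, 0 < ξ2 s)
    (hξ1_int : IntervalIntegrable ξ1 volume 0 τ)
    (hξ2_int : IntervalIntegrable ξ2 volume 0 τ)
    (hprod1 : IntervalIntegrable (fun s => ξ1 s * κt (τ - s)) volume 0 τ)
    (hprod2 : IntervalIntegrable (fun s => ξ2 s * κt (τ - s)) volume 0 τ)
    (heq : (∫ s in (0:ℝ)..τ, ξ1 s) = ∫ s in (0:ℝ)..τ, ξ2 s)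
    (hdiff_anti : AntitoneOn (fun s => ξ1 s - ξ2 s) (Set.Icc 0 τ))
    (hden2_pos : 0 < ∫ s in (0:ℝ)..τ, ξ2 s * κt (τ - s)) :
    (0 ≤ ∫ s in (0:ℝ)..τ, (ξ1 s - ξ2 s) * κt (τ - s)) ∧
      ((∫ s in (0:ℝ)..τ, ξ1 s) * κt τ) / (∫ s in (0:ℝ)..τ, ξ1 s * κt (τ - s)) ≤
        ((∫ s in (0:ℝ)..τ, ξ2 s) * κt τ) / (∫ s in (0:ℝ)..τ, ξ2 s * κt (τ - s)) := by
  have hreflect : AntitoneOn (fun s => κt (τ - s)) (Set.Icc 0 τ) :=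
    fun s hs u hu hsu => hκt_mono ⟨by linarith [hu.2], by linarith [hu.1]⟩
      ⟨by linarith [hs.2], by linarith [hs.1]⟩ (by linarith)
  have hdiff_eq : (∫ s in (0:ℝ)..τ, (ξ1 s - ξ2 s) * κt (τ - s)) =
      (∫ s in (0:ℝ)..τ, ξ1 s * κt (τ - s)) - ∫ s in (0:ℝ)..τ, ξ2 s * κt (τ - s) := by
    simp only [sub_mul]
    exact integral_sub hprod1 hprod2
  have hcross : 0 ≤ ∫ s in (0:ℝ)..τ, (ξ1 s - ξ2 s) * κt (τ - s) := by
    refine integral_mul_nonneg_of_antitoneOn hτ.le hdiff_anti hreflect (hξ1_int.sub hξ2_int) ?_ ?_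
    · simpa only [sub_mul] using hprod1.sub hprod2
    · rw [integral_sub hξ1_int hξ2_int, heq, sub_self]
  have hκt_τ : 0 ≤ κt τ := by
    have hκt_zero : κt 0 = 0 := by simp [hκt]
    simpa [hκt_zero] using hκt_mono ⟨le_rfl, hτ.le⟩ ⟨hτ.le, le_rfl⟩ hτ.le
  have hmass : 0 ≤ ∫ s in (0:ℝ)..τ, ξ2 s := integral_nonneg hτ.le fun s hs => (hξ2_pos s hs).le
  refine ⟨hcross, ?_⟩
  rw [heq]
  exact div_le_div_of_nonneg_left (mul_nonneg hmass hκt_τ) hden2_pos (by linarith)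

theorem affine_ssr_backwardation_lowers (κ : ℝ → ℝ) (τ : ℝ) (hτ : 0 < τ)
    (hκ_nonneg : ∀ s, 0 < s → 0 ≤ κ s)
    (hκ_loc : LocallyIntegrableOn κ (Set.Ioi 0))
    (κt : ℝ → ℝ) (hκt : κt = fun x => ∫ s in (0:ℝ)..x, κ s)
    (hκt_mono : MonotoneOn κt (Set.Icc 0 τ))
    (ξ1 ξ2 : ℝ → ℝ)
    (hξ1_pos : ∀ s ∈ Set.Icc (0:ℝ) τ, 0 < ξ1 s)
    (hξ2_pos : ∀ s ∈ Set.Icc (0:ℝ) τ, 0 < ξ2 s)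
    (hξ1_int : IntervalIntegrable ξ1 volume 0 τ)
    (hξ2_int : IntervalIntegrable ξ2 volume 0 τ)
    (hprod1 : IntervalIntegrable (fun s => ξ1 s * κt (τ - s)) volume 0 τ)
    (hprod2 : IntervalIntegrable (fun s => ξ2 s * κt (τ - s)) volume 0 τ)
    (heq : (∫ s in (0:ℝ)..τ, ξ1 s) = ∫ s in (0:ℝ)..τ, ξ2 s)
    (hdiff_anti : AntitoneOn (fun s => ξ1 s - ξ2 s) (Set.Icc 0 τ))
    (h0 : ξ2 0 ≤ ξ1 0)
    (hden2_pos : 0 < ∫ s in (0:ℝ)..τ, ξ2 s * κt (τ - s)) :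
    (0 ≤ ∫ s in (0:ℝ)..τ, (ξ1 s - ξ2 s) * κt (τ - s)) ∧
      ((∫ s in (0:ℝ)..τ, ξ1 s) * κt τ) / (∫ s in (0:ℝ)..τ, ξ1 s * κt (τ - s)) ≤
        ((∫ s in (0:ℝ)..τ, ξ2 s) * κt τ) / (∫ s in (0:ℝ)..τ, ξ2 s * κt (τ - s)) :=
  affine_ssr_backwardation_lowers_general κ τ hτ κt hκt hκt_mono ξ1 ξ2 hξ2_pos hξ1_int hξ2_int
    hprod1 hprod2 heq hdiff_anti hden2_pos
end

section
/- For M > 0: ∫₀^∞ e^{-(a²+1/4)M/2}/(a² + 1/4) da = 2π·(1 - Φ(√M/2)), where Φ is the standard normal CDF. -/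
open Real MeasureTheory Set Filter

noncomputable def stdNormalCDF (x : ℝ) : ℝ :=
  (Real.sqrt (2 * Real.pi))⁻¹ * ∫ t in Set.Iic x, Real.exp (-t ^ 2 / 2)

lemma exp_tail_integral {c : ℝ} (hc : 0 < c) (M : ℝ) :
    ∫ t in Set.Ioi M, Real.exp (-c * t / 2) / 2 = Real.exp (-c * M / 2) / c := by
  have hderiv : ∀ x ∈ Set.Ici M, HasDerivAt (fun t => -Real.exp (-c * t / 2) / c)
      (Real.exp (-c * x / 2) / 2) x := by
    intro x _
    have h1 : HasDerivAt (fun t : ℝ => -c * t / 2) (-c / 2) x := by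
      simpa using ((hasDerivAt_id x).const_mul (-c)).div_const 2
    have h2 : HasDerivAt (fun t => -Real.exp (-c * t / 2) / c) _ x := (h1.exp).neg.div_const c
    convert h2 using 1
    field_simp
  have hint : IntegrableOn (fun t => Real.exp (-c * t / 2) / 2) (Set.Ioi M) := by
    have := (exp_neg_integrableOn_Ioi M (by positivity : (0:ℝ) < c / 2)).div_const 2
    refine this.congr (Filter.Eventually.of_forall fun x => by ring_nf)
  have htend : Tendsto (fun t => -Real.exp (-c * t / 2) / c) atTop (nhds 0) := by
    have : Tendsto (fun t : ℝ => -c * t / 2) atTop atBot := by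
      apply Tendsto.atBot_div_const (by norm_num)
      exact tendsto_id.const_mul_atTop_of_neg (by linarith)
    have := (Real.tendsto_exp_atBot.comp this).neg.div_const c
    simpa using this
  have := integral_Ioi_of_hasDerivAt_of_tendsto' hderiv hint htend
  rw [this]
  field_simp
  ring

lemma integrable_gauss : Integrable (fun s : ℝ => Real.exp (-s ^ 2 / 2)) := by
  have := integrable_exp_neg_mul_sq (show (0:ℝ) < 1/2 by norm_num)
  refine this.congr (Filter.Eventually.of_forall fun x => by ring_nf)

lemma gauss_tail (x : ℝ) :
    ∫ s in Set.Ioi x, Real.exp (-s ^ 2 / 2) =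
      Real.sqrt (2 * Real.pi) * (1 - stdNormalCDF x) := by
  have htot : ∫ s : ℝ, Real.exp (-s ^ 2 / 2) = Real.sqrt (2 * Real.pi) := by
    have := integral_gaussian (1/2 : ℝ)
    rw [show Real.pi / (1/2) = 2 * Real.pi by ring] at this
    rw [← this]
    congr 1; ext s; ring_nf
  have hsplit := intervalIntegral.integral_Iic_add_Ioi
    (integrable_gauss.integrableOn (s := Set.Iic x))
    (integrable_gauss.integrableOn (s := Set.Ioi x))
  have hpos : (0:ℝ) < Real.sqrt (2 * Real.pi) := Real.sqrt_pos.2 (by positivity)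
  rw [htot] at hsplit
  rw [stdNormalCDF, mul_sub, mul_one, mul_inv_cancel_left₀ hpos.ne']
  linarith

theorem lewis_integrated_identity (M : ℝ) (hM : 0 < M) :
    (∫ a in Set.Ioi (0:ℝ), Real.exp (-(a ^ 2 + 1 / 4) * M / 2) / (a ^ 2 + 1 / 4)) =
      2 * Real.pi * (1 - stdNormalCDF (Real.sqrt M / 2)) := by
  have hM0 : (0:ℝ) ≤ M := hM.le
  -- Step A: rewrite integrand as a tail integral in t
  have stepA : (∫ a in Set.Ioi (0:ℝ), Real.exp (-(a ^ 2 + 1 / 4) * M / 2) / (a ^ 2 + 1 / 4)) =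
      ∫ a in Set.Ioi (0:ℝ), ∫ t in Set.Ioi M, Real.exp (-(a ^ 2 + 1 / 4) * t / 2) / 2 := by
    refine setIntegral_congr_fun measurableSet_Ioi (fun a _ => ?_)
    have hc : (0:ℝ) < a ^ 2 + 1 / 4 := by positivity
    rw [exp_tail_integral hc M]
  -- Step B: Fubini
  have hInt : Integrable (Function.uncurry fun a t =>
      Real.exp (-(a ^ 2 + 1 / 4) * t / 2) / 2)
      ((volume.restrict (Set.Ioi (0:ℝ))).prod (volume.restrict (Set.Ioi M))) := by
    have h1 : Integrable (fun a : ℝ => Real.exp (-(M/2) * a ^ 2))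
        (volume.restrict (Set.Ioi (0:ℝ))) :=
      (integrable_exp_neg_mul_sq (half_pos hM)).restrict
    have h2 : Integrable (fun t : ℝ => Real.exp (-(1/8) * t) / 2)
        (volume.restrict (Set.Ioi M)) :=
      (exp_neg_integrableOn_Ioi M (by norm_num)).div_const 2
    have hbound := h1.mul_prod h2
    refine hbound.mono ?_ ?_
    · apply Continuous.aestronglyMeasurable
      fun_prop
    · rw [Measure.prod_restrict]
      refine (ae_restrict_iff' (measurableSet_Ioi.prod measurableSet_Ioi)).2
        (Filter.Eventually.of_forall fun z hz => ?_)
      obtain ⟨ha, ht⟩ := hz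
      simp only [Set.mem_Ioi] at ha ht
      have e1 : (0:ℝ) < Real.exp (-(z.1 ^ 2 + 1 / 4) * z.2 / 2) / 2 := by positivity
      have e2 : (0:ℝ) ≤ Real.exp (-(M/2) * z.1 ^ 2) * (Real.exp (-(1/8) * z.2) / 2) := by
        positivity
      simp only [Function.uncurry]
      rw [Real.norm_of_nonneg e1.le, Real.norm_of_nonneg e2]
      have : Real.exp (-(M/2) * z.1 ^ 2) * (Real.exp (-(1/8) * z.2) / 2) =
          Real.exp (-(M/2) * z.1 ^ 2 + -(1/8) * z.2) / 2 := by
        rw [Real.exp_add]; ring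
      rw [this]
      have hle : -(z.1 ^ 2 + 1 / 4) * z.2 / 2 ≤ -(M/2) * z.1 ^ 2 + -(1/8) * z.2 := by
        have h3 : z.1 ^ 2 * M ≤ z.1 ^ 2 * z.2 := by
          apply mul_le_mul_of_nonneg_left ht.le (by positivity)
        nlinarith
      have := Real.exp_le_exp.2 hle
      linarith
  have stepB : (∫ a in Set.Ioi (0:ℝ), ∫ t in Set.Ioi M,
        Real.exp (-(a ^ 2 + 1 / 4) * t / 2) / 2) =
      ∫ t in Set.Ioi M, ∫ a in Set.Ioi (0:ℝ), Real.exp (-(a ^ 2 + 1 / 4) * t / 2) / 2 :=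
    integral_integral_swap hInt
  -- Step C: inner Gaussian integral in a
  have stepC : (∫ t in Set.Ioi M, ∫ a in Set.Ioi (0:ℝ),
        Real.exp (-(a ^ 2 + 1 / 4) * t / 2) / 2) =
      ∫ t in Set.Ioi M, Real.sqrt (Real.pi / (t/2)) / 2 * (Real.exp (-t/8) / 2) := by
    refine setIntegral_congr_fun measurableSet_Ioi (fun t htm => ?_)
    simp only [Set.mem_Ioi] at htm
    have ht : 0 < t := lt_trans hM htm
    have : (∫ a in Set.Ioi (0:ℝ), Real.exp (-(a ^ 2 + 1 / 4) * t / 2) / 2) =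
        ∫ a in Set.Ioi (0:ℝ), Real.exp (-(t/2) * a ^ 2) * (Real.exp (-t/8) / 2) := by
      refine setIntegral_congr_fun measurableSet_Ioi (fun a _ => ?_)
      rw [show Real.exp (-(t/2) * a ^ 2) * (Real.exp (-t/8) / 2) =
        Real.exp (-(t/2) * a ^ 2 + -t/8) / 2 by rw [Real.exp_add]; ring]
      congr 2
      ring
    rw [this, integral_mul_const, integral_gaussian_Ioi]
  -- Step D: change of variables t = 4 s^2
  have himg : (fun s : ℝ => 4 * s ^ 2) '' Set.Ioi (Real.sqrt M / 2) = Set.Ioi M := by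
    ext t
    constructor
    · rintro ⟨s, hs, rfl⟩
      simp only [Set.mem_Ioi] at hs ⊢
      have h0 : 0 ≤ Real.sqrt M / 2 := by positivity
      have : (Real.sqrt M / 2) ^ 2 < s ^ 2 := by
        apply pow_lt_pow_left₀ hs h0
        norm_num
      have hsq : (Real.sqrt M) ^ 2 = M := Real.sq_sqrt hM0
      nlinarith
    · intro htm
      simp only [Set.mem_Ioi] at htm
      have ht0 : 0 < t := lt_trans hM htm
      refine ⟨Real.sqrt t / 2, ?_, ?_⟩
      · simp only [Set.mem_Ioi]
        have := Real.sqrt_lt_sqrt hM0 htm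
        linarith
      · have : (Real.sqrt t) ^ 2 = t := Real.sq_sqrt ht0.le
        nlinarith
  have hderiv : ∀ s ∈ Set.Ioi (Real.sqrt M / 2),
      HasDerivWithinAt (fun s : ℝ => 4 * s ^ 2) (8 * s) (Set.Ioi (Real.sqrt M / 2)) s := by
    intro s _
    have : HasDerivAt (fun s : ℝ => 4 * s ^ 2) (8 * s) s := by
      have : HasDerivAt (fun s : ℝ => 4 * s ^ 2) _ s := (hasDerivAt_pow 2 s).const_mul (4:ℝ)
      convert this using 1
      simp; ring
    exact this.hasDerivWithinAt
  have hinj : Set.InjOn (fun s : ℝ => 4 * s ^ 2) (Set.Ioi (Real.sqrt M / 2)) := by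
    intro x hx y hy h
    simp only [Set.mem_Ioi] at hx hy
    have h0 : 0 ≤ Real.sqrt M / 2 := by positivity
    have hx0 : 0 < x := lt_of_le_of_lt h0 hx
    have hy0 : 0 < y := lt_of_le_of_lt h0 hy
    have h' : 4 * x ^ 2 = 4 * y ^ 2 := h
    nlinarith [sq_nonneg (x - y), sq_nonneg (x + y), mul_pos hx0 hy0]
  have stepD := integral_image_eq_integral_abs_deriv_smul measurableSet_Ioi hderiv hinj
    (fun t => Real.sqrt (Real.pi / (t/2)) / 2 * (Real.exp (-t/8) / 2))
  rw [himg] at stepD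
  -- simplify the substituted integrand
  have stepE : (∫ s in Set.Ioi (Real.sqrt M / 2),
        |8 * s| • (Real.sqrt (Real.pi / (4 * s ^ 2 / 2)) / 2 *
          (Real.exp (-(4 * s ^ 2) / 8) / 2))) =
      ∫ s in Set.Ioi (Real.sqrt M / 2), Real.sqrt (2 * Real.pi) * Real.exp (-s ^ 2 / 2) := by
    refine setIntegral_congr_fun measurableSet_Ioi (fun s hs => ?_)
    simp only [Set.mem_Ioi] at hs
    have h0 : 0 ≤ Real.sqrt M / 2 := by positivity
    have hs0 : 0 < s := lt_of_le_of_lt h0 hs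
    have h2 : Real.sqrt (Real.pi / (4 * s ^ 2 / 2)) = Real.sqrt Real.pi / (Real.sqrt 2 * s) := by
      rw [show Real.pi / (4 * s ^ 2 / 2) = (Real.sqrt Real.pi / (Real.sqrt 2 * s)) ^ 2 by
        rw [div_pow, mul_pow, Real.sq_sqrt Real.pi_pos.le, Real.sq_sqrt (by norm_num : (0:ℝ) ≤ 2)]
        ring]
      exact Real.sqrt_sq (by positivity)
    have h3 : -(4 * s ^ 2) / 8 = -s ^ 2 / 2 := by ring
    rw [smul_eq_mul, abs_of_pos (by linarith : (0:ℝ) < 8 * s), h2, h3,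
      Real.sqrt_mul (by norm_num : (0:ℝ) ≤ 2)]
    have hs2 : Real.sqrt 2 ≠ 0 := by positivity
    field_simp
    have h22 : Real.sqrt 2 * Real.sqrt 2 = 2 := Real.mul_self_sqrt (by norm_num)
    linear_combination (-4) * h22
  rw [stepA, stepB, stepC, stepD, stepE, integral_const_mul, gauss_tail]
  have hsq : Real.sqrt (2 * Real.pi) * Real.sqrt (2 * Real.pi) = 2 * Real.pi :=
    Real.mul_self_sqrt (by positivity)
  rw [← mul_assoc, hsq]
end
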